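/- Fix e∈[0,1), e_J∈[0,1), Θ∈ℝ, G>0, and define Ā₁(a), B̄₁(a), C̄₁(a) as in the context. Then there exists a₀>0 such that for all a with 0<a<a₀ the quadratic form W̄₁(p₃,q₃) = ½(Ā₁(a)·p₃² + 2B̄₁(a)·p₃q₃ + C̄₁(a)·q₃²) is positive definite: for every (p₃,q₃) ≠ (0,0) one has Ā₁(a)·p₃² + 2B̄₁(a)·p₃q₃ + C̄₁(a)·q₃² > 0. -/
import Mathlib


open Real

/-- Averaged coefficient `Ā₁` of `p₃²` in the small-inclination case, `ω+Ω=Θ`. -/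
noncomputable def Abar1 (e eJ Θ G a : ℝ) : ℝ :=
  3 * (1 + 4 * e ^ 2 - 5 * e ^ 2 * Real.cos Θ ^ 2) * a ^ 2 /
      (4 * G * (1 - eJ ^ 2) ^ ((3:ℝ) / 2))
    + 15 * e * eJ * Real.cos Θ * (70 * e ^ 2 * Real.cos Θ ^ 2 - 60 * e ^ 2 - 10) * a ^ 3 /
      (64 * G * (1 - eJ ^ 2) ^ ((5:ℝ) / 2))

/-- Averaged coefficient `B̄₁` of `p₃q₃` in the small-inclination case, `ω+Ω=Θ`. -/
noncomputable def Bbar1 (e eJ Θ G a : ℝ) : ℝ :=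
  15 * e ^ 2 * Real.cos Θ * Real.sin Θ * a ^ 2 /
      (4 * G * (1 - eJ ^ 2) ^ ((3:ℝ) / 2))
    - 15 * e * Real.sin Θ * eJ * (140 * e ^ 2 * Real.cos Θ ^ 2 - 17 * e ^ 2 + 24) * a ^ 3 /
      (128 * G * (1 - eJ ^ 2) ^ ((5:ℝ) / 2))

/-- Averaged coefficient `C̄₁` of `q₃²` in the small-inclination case, `ω+Ω=Θ`. -/
noncomputable def Cbar1 (e eJ Θ G a : ℝ) : ℝ :=
  3 * (1 - e ^ 2 + 5 * e ^ 2 * Real.cos Θ ^ 2) * a ^ 2 /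
      (4 * G * (1 - eJ ^ 2) ^ ((3:ℝ) / 2))
    - 15 * e * eJ * Real.cos Θ * (70 * e ^ 2 * Real.cos Θ ^ 2 - 27 * e ^ 2 + 34) * a ^ 3 /
      (64 * G * (1 - eJ ^ 2) ^ ((5:ℝ) / 2))

lemma quad_form_pos (A B C p q : ℝ) (hA : 0 < A) (hD : B ^ 2 < A * C)
    (h : p ≠ 0 ∨ q ≠ 0) : 0 < A * p ^ 2 + 2 * B * p * q + C * q ^ 2 := by
  rcases eq_or_ne q 0 with hq | hq
  · have hp : p ≠ 0 := h.resolve_right (by simp [hq])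
    have hp2 : 0 < p ^ 2 := by positivity
    subst hq; nlinarith
  · have hq2 : 0 < q ^ 2 := by positivity
    nlinarith [sq_nonneg (A * p + B * q), mul_pos (sub_pos.mpr hD) hq2]

theorem small_inclination_quadratic_form_positive_definite
    (e eJ Θ G : ℝ) (he0 : 0 ≤ e) (he1 : e < 1) (heJ0 : 0 ≤ eJ) (heJ1 : eJ < 1)
    (hG : 0 < G) :
    ∃ a₀ > 0, ∀ a : ℝ, 0 < a → a < a₀ →
      ∀ p₃ q₃ : ℝ, (p₃, q₃) ≠ (0, 0) →
        0 < Abar1 e eJ Θ G a * p₃ ^ 2 + 2 * Bbar1 e eJ Θ G a * p₃ * q₃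
            + Cbar1 e eJ Θ G a * q₃ ^ 2 := by
  obtain ⟨c, hc⟩ : ∃ x, x = Real.cos Θ := ⟨_, rfl⟩
  obtain ⟨s, hs⟩ : ∃ x, x = Real.sin Θ := ⟨_, rfl⟩
  have hcs : s ^ 2 = 1 - c ^ 2 := by
    rw [hc, hs]; linarith [Real.sin_sq_add_cos_sq Θ]
  have heJ : (0:ℝ) < 1 - eJ ^ 2 := by nlinarith
  obtain ⟨K3, hK3⟩ : ∃ x, x = (1 - eJ ^ 2) ^ ((3:ℝ)/2) := ⟨_, rfl⟩
  obtain ⟨K5, hK5⟩ : ∃ x, x = (1 - eJ ^ 2) ^ ((5:ℝ)/2) := ⟨_, rfl⟩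
  have hK3p : 0 < K3 := hK3 ▸ Real.rpow_pos_of_pos heJ _
  have hK5p : 0 < K5 := hK5 ▸ Real.rpow_pos_of_pos heJ _
  obtain ⟨k, hk⟩ : ∃ x, x = 3 / (4 * G * K3) := ⟨_, rfl⟩
  have hkp : 0 < k := by rw [hk]; positivity
  obtain ⟨α, hα⟩ : ∃ x, x = k * (1 + 4 * e ^ 2 - 5 * e ^ 2 * c ^ 2) := ⟨_, rfl⟩
  obtain ⟨β, hβ⟩ : ∃ x, x = 5 * k * e ^ 2 * c * s := ⟨_, rfl⟩
  obtain ⟨γ, hγ⟩ : ∃ x, x = k * (1 - e ^ 2 + 5 * e ^ 2 * c ^ 2) := ⟨_, rfl⟩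
  obtain ⟨α', hα'⟩ : ∃ x, x = 15 * e * eJ * c * (70 * e ^ 2 * c ^ 2 - 60 * e ^ 2 - 10) / (64 * G * K5) := ⟨_, rfl⟩
  obtain ⟨β', hβ'⟩ : ∃ x, x = -(15 * e * s * eJ * (140 * e ^ 2 * c ^ 2 - 17 * e ^ 2 + 24) / (128 * G * K5)) := ⟨_, rfl⟩
  obtain ⟨γ', hγ'⟩ : ∃ x, x = -(15 * e * eJ * c * (70 * e ^ 2 * c ^ 2 - 27 * e ^ 2 + 34) / (64 * G * K5)) := ⟨_, rfl⟩
  have hc2 : c ^ 2 ≤ 1 := by rw [hc]; exact Real.cos_sq_le_one Θ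
  have hαp : 0 < α := by
    rw [hα]; apply mul_pos hkp; nlinarith
  obtain ⟨δ, hδdef⟩ : ∃ x, x = α * γ - β ^ 2 := ⟨_, rfl⟩
  have hδp : 0 < δ := by
    have hid : δ = k ^ 2 * ((1 + 4 * e ^ 2) * (1 - e ^ 2)) := by
      rw [hδdef, hα, hβ, hγ]
      linear_combination (-(25 * k ^ 2 * e ^ 4 * c ^ 2)) * hcs
    rw [hid]
    exact mul_pos (pow_pos hkp 2) (mul_pos (by nlinarith) (by nlinarith))
  obtain ⟨c₁, hc₁⟩ : ∃ x, x = α * γ' + γ * α' - 2 * β * β' := ⟨_, rfl⟩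
  obtain ⟨c₂, hc₂⟩ : ∃ x, x = α' * γ' - β' ^ 2 := ⟨_, rfl⟩
  have hd1 : (0:ℝ) < α / (|α'| + 1) := by positivity
  have hd2 : (0:ℝ) < δ / (|c₁| + |c₂| + 1) := by positivity
  refine ⟨min 1 (min (α / (|α'| + 1)) (δ / (|c₁| + |c₂| + 1))),
    lt_min one_pos (lt_min hd1 hd2), ?_⟩
  intro a ha ha0 p q hpq
  have ha1 : a < 1 := lt_of_lt_of_le ha0 (min_le_left _ _)
  have ha2 : a < α / (|α'| + 1) :=
    lt_of_lt_of_le ha0 ((min_le_right _ _).trans (min_le_left _ _))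
  have ha3 : a < δ / (|c₁| + |c₂| + 1) :=
    lt_of_lt_of_le ha0 ((min_le_right _ _).trans (min_le_right _ _))
  have haα : a * (|α'| + 1) < α := (lt_div_iff₀ (by positivity)).mp ha2
  have haδ : a * (|c₁| + |c₂| + 1) < δ := (lt_div_iff₀ (by positivity)).mp ha3
  have hP : 0 < α + α' * a := by
    have h1 : -|α'| * a ≤ α' * a := mul_le_mul_of_nonneg_right (neg_abs_le α') ha.le
    linarith [h1, haα, ha]
  have hPS : (α + α' * a) * (γ + γ' * a) - (β + β' * a) ^ 2 = δ + c₁ * a + c₂ * a ^ 2 := by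
    rw [hδdef, hc₁, hc₂]; ring
  have hD : (β + β' * a) ^ 2 < (α + α' * a) * (γ + γ' * a) := by
    have haa : a ^ 2 ≤ a := by rw [sq]; exact mul_le_of_le_one_left ha.le ha1.le
    have h1 : -|c₁| * a ≤ c₁ * a := mul_le_mul_of_nonneg_right (neg_abs_le c₁) ha.le
    have h2 : -|c₂| * a ^ 2 ≤ c₂ * a ^ 2 :=
      mul_le_mul_of_nonneg_right (neg_abs_le c₂) (sq_nonneg a)
    have h3 : |c₂| * a ^ 2 ≤ |c₂| * a := mul_le_mul_of_nonneg_left haa (abs_nonneg c₂)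
    linarith [hPS, haδ, h1, h2, h3, ha]
  have hAeq : Abar1 e eJ Θ G a = (α + α' * a) * a ^ 2 := by
    simp only [Abar1, hα, hα', hk, ← hc, ← hK3, ← hK5]; ring
  have hBeq : Bbar1 e eJ Θ G a = (β + β' * a) * a ^ 2 := by
    simp only [Bbar1, hβ, hβ', hk, ← hc, ← hs, ← hK3, ← hK5]; ring
  have hCeq : Cbar1 e eJ Θ G a = (γ + γ' * a) * a ^ 2 := by
    simp only [Cbar1, hγ, hγ', hk, ← hc, ← hK3, ← hK5]; ring
  have hor : p ≠ 0 ∨ q ≠ 0 := by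
    by_contra h
    push_neg at h
    exact hpq (by rw [h.1, h.2])
  have hquad := quad_form_pos _ _ _ p q hP hD hor
  have key : Abar1 e eJ Θ G a * p ^ 2 + 2 * Bbar1 e eJ Θ G a * p * q
      + Cbar1 e eJ Θ G a * q ^ 2
      = a ^ 2 * ((α + α' * a) * p ^ 2 + 2 * (β + β' * a) * p * q + (γ + γ' * a) * q ^ 2) := by
    rw [hAeq, hBeq, hCeq]; ring
  rw [key]
  exact mul_pos (pow_pos ha 2) hquad
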